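/- The matrix A, regarded as a matrix with real entries, has at least two distinct real eigenvalues that are strictly greater than 1; that is, there exist real numbers λ ≠ μ with λ > 1 and μ > 1 and nonzero vectors v, w ∈ ℝ^{2n+1} such that A·v = λ·v and A·w = μ·w. Consequently the product of the two largest eigenvalues of A is strictly greater than 1 (in particular, it is different from 1). -/

import Mathlib

/-!
For `x` different from every diagonal entry `D i` (`i ≠ o`), the arrowhead matrix with tip `o` has
the eigenvector `(1, ((x - D i)⁻¹)_{i ≠ o})` exactly when `x` solves the secular equation
`x = D o + ∑_{i ≠ o} (x - D i)⁻¹`. The function `x - ∑ (x - D i)⁻¹` tends to `-∞` just right of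
each pole, to `+∞` just left of each pole and at `+∞`, so the intermediate value theorem gives a
root above the largest diagonal entry and a root between the two largest ones. Here the diagonal
`d 1 < d 2 < ⋯` is strictly increasing with `d 1 = 1`, so both roots exceed `1`, and so do the
two largest eigenvalues.
-/

open Finset Filter Topology Matrix

section Secular

variable {ι K : Type*}

def secularSum [Field K] (D : ι → K) (s : Finset ι) (x : K) : K :=
  ∑ k ∈ s, (x - D k)⁻¹

variable {D : ι → ℝ} {s : Finset ι} {i j : ι}

lemma continuousOn_secularSum {t : Set ℝ} (ht : ∀ x ∈ t, ∀ k ∈ s, x ≠ D k) :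
    ContinuousOn (secularSum D s) t :=
  continuousOn_finsetSum s fun k hk =>
    (continuousOn_id.sub continuousOn_const).inv₀ fun x hx => sub_ne_zero.2 (ht x hx k hk)

lemma continuousAt_secularSum {a : ℝ} (ha : ∀ k ∈ s, a ≠ D k) :
    ContinuousAt (secularSum D s) a :=
  tendsto_finsetSum s fun k hk =>
    (continuous_id.sub continuous_const).continuousAt.inv₀ (sub_ne_zero.2 (ha k hk))

lemma tendsto_secularSum_atTop : Tendsto (secularSum D s) atTop (𝓝 0) := by
  have hterm : ∀ k ∈ s, Tendsto (fun x => (x - D k)⁻¹) atTop (𝓝 0) := fun k _ =>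
    tendsto_inv_atTop_zero.comp (tendsto_atTop_add_const_right atTop (-D k) tendsto_id)
  have hsum := tendsto_finsetSum s hterm
  rw [sum_const_zero] at hsum
  exact hsum

lemma secularSum_eq_inv_add_erase [DecidableEq ι] (hj : j ∈ s) (x : ℝ) :
    secularSum D s x = (x - D j)⁻¹ + secularSum D (s.erase j) x :=
  (add_sum_erase s _ hj).symm

lemma continuousAt_secularSum_erase [DecidableEq ι] (hD : ∀ k ∈ s, k ≠ j → D k ≠ D j) :
    ContinuousAt (secularSum D (s.erase j)) (D j) :=
  continuousAt_secularSum fun k hk => (hD k (mem_of_mem_erase hk) (ne_of_mem_erase hk)).symm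

lemma tendsto_secularSum_nhdsGT [DecidableEq ι] (hj : j ∈ s)
    (hD : ∀ k ∈ s, k ≠ j → D k ≠ D j) : Tendsto (secularSum D s) (𝓝[>] D j) atTop := by
  have hpole : Tendsto (fun x => x - D j) (𝓝[>] D j) (𝓝[>] 0) :=
    tendsto_nhdsWithin_iff.2 ⟨tendsto_nhdsWithin_of_tendsto_nhds
      (by simpa using (continuous_sub_right (D j)).tendsto (D j)),
      eventually_nhdsWithin_of_forall fun x hx => Set.mem_Ioi.2 (sub_pos.2 hx)⟩
  rw [funext (secularSum_eq_inv_add_erase hj)]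
  exact hpole.inv_tendsto_nhdsGT_zero.atTop_add (tendsto_nhdsWithin_of_tendsto_nhds
      (continuousAt_secularSum_erase hD))

lemma tendsto_secularSum_nhdsLT [DecidableEq ι] (hj : j ∈ s)
    (hD : ∀ k ∈ s, k ≠ j → D k ≠ D j) : Tendsto (secularSum D s) (𝓝[<] D j) atBot := by
  have hpole : Tendsto (fun x => x - D j) (𝓝[<] D j) (𝓝[<] 0) :=
    tendsto_nhdsWithin_iff.2 ⟨tendsto_nhdsWithin_of_tendsto_nhds
      (by simpa using (continuous_sub_right (D j)).tendsto (D j)),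
      eventually_nhdsWithin_of_forall fun x hx => Set.mem_Iio.2 (sub_neg.2 hx)⟩
  rw [funext (secularSum_eq_inv_add_erase hj)]
  exact hpole.inv_tendsto_nhdsLT_zero.atBot_add (tendsto_nhdsWithin_of_tendsto_nhds
      (continuousAt_secularSum_erase hD))

lemma tendsto_sub_secularSum_nhdsGT [DecidableEq ι] (hj : j ∈ s)
    (hD : ∀ k ∈ s, k ≠ j → D k ≠ D j) :
    Tendsto (fun x => x - secularSum D s x) (𝓝[>] D j) atBot := by
  simpa only [sub_eq_add_neg, id, Function.comp_apply] using
    (tendsto_nhdsWithin_of_tendsto_nhds tendsto_id).add_atBot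
      (tendsto_neg_atTop_atBot.comp (tendsto_secularSum_nhdsGT hj hD))

lemma tendsto_sub_secularSum_nhdsLT [DecidableEq ι] (hj : j ∈ s)
    (hD : ∀ k ∈ s, k ≠ j → D k ≠ D j) :
    Tendsto (fun x => x - secularSum D s x) (𝓝[<] D j) atTop := by
  simpa only [sub_eq_add_neg, id, Function.comp_apply] using
    (tendsto_nhdsWithin_of_tendsto_nhds tendsto_id).add_atTop
      (tendsto_neg_atBot_atTop.comp (tendsto_secularSum_nhdsLT hj hD))

lemma tendsto_sub_secularSum_atTop : Tendsto (fun x => x - secularSum D s x) atTop atTop := by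
  simpa only [sub_eq_add_neg, id, neg_zero] using
    tendsto_id.atTop_add (tendsto_secularSum_atTop (D := D) (s := s)).neg

lemma exists_eq_add_secularSum_mem_Ioo [DecidableEq ι] (c : ℝ) (hi : i ∈ s) (hj : j ∈ s)
    (hinj : Set.InjOn D s) (hij : D i < D j) (hgap : ∀ k ∈ s, D k ∉ Set.Ioo (D i) (D j)) :
    ∃ x ∈ Set.Ioo (D i) (D j), (∀ k ∈ s, x ≠ D k) ∧ x = c + secularSum D s x := by
  have hsimple : ∀ {l}, l ∈ s → ∀ k ∈ s, k ≠ l → D k ≠ D l :=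
    fun hl k hk hkl h => hkl (hinj hk hl h)
  have hpoles : ∀ x ∈ Set.Ioo (D i) (D j), ∀ k ∈ s, x ≠ D k :=
    fun x hx k hk h => hgap k hk (h ▸ hx)
  obtain ⟨x, hx, hxc⟩ := isPreconnected_Ioo.intermediate_value_Iii
    (le_principal_iff.2 (Ioo_mem_nhdsGT hij)) (le_principal_iff.2 (Ioo_mem_nhdsLT hij))
    (continuousOn_id.sub (continuousOn_secularSum hpoles))
    (tendsto_sub_secularSum_nhdsGT hi (hsimple hi)) (tendsto_sub_secularSum_nhdsLT hj (hsimple hj))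
    (Set.mem_univ c)
  exact ⟨x, hx, hpoles x hx, eq_add_of_sub_eq hxc⟩

lemma exists_eq_add_secularSum_gt [DecidableEq ι] (c : ℝ) (hj : j ∈ s)
    (hinj : Set.InjOn D s) (hmax : ∀ k ∈ s, D k ≤ D j) :
    ∃ x, D j < x ∧ (∀ k ∈ s, x ≠ D k) ∧ x = c + secularSum D s x := by
  have hpoles : ∀ x ∈ Set.Ioi (D j), ∀ k ∈ s, x ≠ D k :=
    fun x hx k hk => ((hmax k hk).trans_lt hx).ne'
  obtain ⟨x, hx, hxc⟩ := isPreconnected_Ioi.intermediate_value_Iii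
    (le_principal_iff.2 self_mem_nhdsWithin) (le_principal_iff.2 (Ioi_mem_atTop (D j)))
    (continuousOn_id.sub (continuousOn_secularSum hpoles))
    (tendsto_sub_secularSum_nhdsGT hj fun k hk hkj h => hkj (hinj hk hj h))
    tendsto_sub_secularSum_atTop (Set.mem_univ c)
  exact ⟨x, hx, hpoles x hx, eq_add_of_sub_eq hxc⟩

end Secular

section Arrowhead

variable {ι K : Type*} [Fintype ι] [DecidableEq ι] [Field K]

def arrowhead (o : ι) (D : ι → K) : Matrix ι ι K :=
  Matrix.of fun i j => if i = j then D i else if i = o ∨ j = o then 1 else 0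

lemma exists_arrowhead_mulVec_eq_smul {o : ι} {D : ι → K} {x : K}
    (hx : ∀ i ∈ univ.erase o, x ≠ D i) (hsec : x = D o + secularSum D (univ.erase o) x) :
    ∃ v : ι → K, v ≠ 0 ∧ arrowhead o D *ᵥ v = x • v := by
  set v : ι → K := fun i => if i = o then 1 else (x - D i)⁻¹
  refine ⟨v, fun h => by simpa [v] using congr_fun h o, funext fun i => ?_⟩
  simp only [Matrix.mulVec, dotProduct, arrowhead, Matrix.of_apply, Pi.smul_apply, smul_eq_mul]
  by_cases hi : i = o
  · subst hi
    have hrow : ∀ j ∈ univ.erase i,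
        (if i = j then D i else if i = i ∨ j = i then 1 else 0) * v j = (x - D j)⁻¹ :=
      fun j hj => by simp [v, ne_of_mem_erase hj, (ne_of_mem_erase hj).symm]
    rw [← add_sum_erase _ _ (mem_univ i), sum_congr rfl hrow]
    simpa [v, secularSum] using hsec.symm
  · rw [Fintype.sum_eq_add i o hi fun j hj => by simp [hj.2, Ne.symm hj.1, hi]]
    have : x - D i ≠ 0 := sub_ne_zero.2 (hx i (mem_erase.2 ⟨hi, mem_univ i⟩))
    simp only [↓reduceIte, hi, or_true, mul_one, v]
    field_simp
    ring

end Arrowhead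

-- For `k ≥ 2`, `d k` is Sylvester's sequence `2, 3, 7, 43, …`.
section Sylvester

variable {d : ℕ → ℤ}

lemma sylvester_one_le (hd1 : d 1 = 1)
    (hdk : ∀ k : ℕ, 2 ≤ k → d k = 1 + ∏ j ∈ Icc 1 (k - 1), d j) : ∀ k, 1 ≤ k → 1 ≤ d k := by
  intro k
  induction k using Nat.strong_induction_on with
  | _ k ih =>
    intro hk
    rcases (show k = 1 ∨ 2 ≤ k by omega) with rfl | hk2
    · exact hd1.ge
    · have hprod : 1 ≤ ∏ j ∈ Icc 1 (k - 1), d j :=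
        one_le_prod fun j hj => ih j (by have := (mem_Icc.1 hj).2; omega) (mem_Icc.1 hj).1
      rw [hdk k hk2]
      omega

lemma sylvester_strictMono (hd1 : d 1 = 1)
    (hdk : ∀ k : ℕ, 2 ≤ k → d k = 1 + ∏ j ∈ Icc 1 (k - 1), d j) :
    StrictMono fun k => d (k + 1) := by
  refine strictMono_nat_of_lt_succ fun m => ?_
  have hprod : 1 ≤ ∏ j ∈ Icc 1 m, d j :=
    one_le_prod fun j hj => sylvester_one_le hd1 hdk j (mem_Icc.1 hj).1
  have hlast : 1 ≤ d (m + 1) := sylvester_one_le hd1 hdk (m + 1) (by omega)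
  rw [hdk (m + 1 + 1) (by omega), Nat.add_sub_cancel, prod_Icc_succ_top (by omega)]
  nlinarith

end Sylvester

lemma one_lt_mul_of_isGreatest {S : Set ℝ} {a b ν₁ ν₂ : ℝ} (h₁ : IsGreatest S ν₁)
    (h₂ : IsGreatest {r | r ∈ S ∧ r ≠ ν₁} ν₂) (hab : a ≠ b) (ha : a ∈ S) (hb : b ∈ S)
    (ha1 : 1 < a) (hb1 : 1 < b) : 1 < ν₁ * ν₂ := by
  have hν₁ : 1 < ν₁ := ha1.trans_le (h₁.2 ha)
  have hν₂ : 1 < ν₂ := by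
    by_cases haν : a = ν₁
    · exact hb1.trans_le (h₂.2 ⟨hb, fun h => hab (haν.trans h.symm)⟩)
    · exact ha1.trans_le (h₂.2 ⟨ha, haν⟩)
  nlinarith

/-- The arrowhead matrix `A`, regarded over `ℝ`, has at least two distinct real
eigenvalues strictly greater than 1; consequently the product of the two largest
eigenvalues of `A` is strictly greater than 1. -/
theorem stmt2 (n : ℕ) (hn : 1 ≤ n) (d : ℕ → ℤ)
    (hd1 : d 1 = 1)
    (hdk : ∀ k : ℕ, 2 ≤ k → d k = 1 + ∏ j ∈ Finset.Icc 1 (k - 1), d j)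
    (A : Matrix (Fin (2 * n + 1)) (Fin (2 * n + 1)) ℤ)
    (hA : ∀ i j : Fin (2 * n + 1), A i j =
      if i = j then d (i.val + 1)
      else if i.val = 0 ∨ j.val = 0 then 1 else 0) :
    (∃ lam mu : ℝ, lam ≠ mu ∧ 1 < lam ∧ 1 < mu ∧
      (∃ v : Fin (2 * n + 1) → ℝ, v ≠ 0 ∧
        (A.map (Int.cast : ℤ → ℝ)).mulVec v = lam • v) ∧
      (∃ w : Fin (2 * n + 1) → ℝ, w ≠ 0 ∧
        (A.map (Int.cast : ℤ → ℝ)).mulVec w = mu • w)) ∧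
    ∀ nu₁ nu₂ : ℝ,
      IsGreatest {r : ℝ | ∃ v : Fin (2 * n + 1) → ℝ, v ≠ 0 ∧
        (A.map (Int.cast : ℤ → ℝ)).mulVec v = r • v} nu₁ →
      IsGreatest {r : ℝ | (∃ v : Fin (2 * n + 1) → ℝ, v ≠ 0 ∧
        (A.map (Int.cast : ℤ → ℝ)).mulVec v = r • v) ∧ r ≠ nu₁} nu₂ →
      1 < nu₁ * nu₂ := by
  set D : Fin (2 * n + 1) → ℝ := fun i => (d (i.val + 1) : ℝ)
  have hDmono : StrictMono D := fun i j hij =>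
    Int.cast_lt.2 (sylvester_strictMono hd1 hdk (Fin.lt_def.1 hij))
  have hAD : A.map (Int.cast : ℤ → ℝ) = arrowhead 0 D := by
    ext i j
    simp [hA, arrowhead, D, Fin.val_eq_zero_iff, apply_ite (Int.cast : ℤ → ℝ)]
  set top := Fin.last (2 * n)
  set pen : Fin (2 * n + 1) := ⟨2 * n - 1, by omega⟩
  have hpen0 : 0 < pen := Fin.lt_def.2 (by simp only [Fin.val_zero, pen]; omega)
  have hpentop : pen < top := Fin.lt_def.2 (by simp only [Fin.val_last, pen, top]; omega)
  have hmem : ∀ {k : Fin (2 * n + 1)}, 0 < k → k ∈ univ.erase 0 :=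
    fun hk => mem_erase.2 ⟨hk.ne', mem_univ _⟩
  have htop : top ∈ univ.erase 0 := hmem (hpen0.trans hpentop)
  have hpen1 : 1 < D pen := by simpa [D, hd1] using hDmono hpen0
  obtain ⟨lam, hlam_gt, hlamD, hlamsec⟩ := exists_eq_add_secularSum_gt (D 0) htop
    hDmono.injective.injOn fun k _ => hDmono.monotone (Fin.le_last k)
  obtain ⟨mu, ⟨hmu_gt, hmu_lt⟩, hmuD, hmusec⟩ := exists_eq_add_secularSum_mem_Ioo (D 0) (hmem hpen0)
    htop hDmono.injective.injOn (hDmono hpentop) fun k _ ⟨h₁, h₂⟩ => by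
      have hk₁ := Fin.lt_def.1 (hDmono.lt_iff_lt.1 h₁)
      have hk₂ := Fin.lt_def.1 (hDmono.lt_iff_lt.1 h₂)
      simp only [pen, top, Fin.val_last] at hk₁ hk₂
      omega
  rw [hAD]
  obtain ⟨v, hv, hveq⟩ := exists_arrowhead_mulVec_eq_smul hlamD hlamsec
  obtain ⟨w, hw, hweq⟩ := exists_arrowhead_mulVec_eq_smul hmuD hmusec
  refine ⟨⟨lam, mu, by linarith, by linarith, by linarith, ⟨v, hv, hveq⟩, ⟨w, hw, hweq⟩⟩,
    fun ν₁ ν₂ h₁ h₂ => one_lt_mul_of_isGreatest h₁ h₂ ?_ ⟨v, hv, hveq⟩ ⟨w, hw, hweq⟩ ?_ ?_⟩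
  all_goals linarith
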